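/- arXiv:0709.2289 — 4 statements merged into one kernel-verified Lean document; each statement's English description precedes it below -/
import Mathlib

section
/- Let Q ∈ Z[x] be a polynomial with integer coefficients, let p be a prime, and suppose every root b of Q in Z/pZ satisfies Q'(b) ≢ 0 (mod p). Let z_p be the number of roots of Q in Z/pZ. Assume Q(i) ≠ 0 for all positive integers i. Then (1/n) Σ_{i=1}^{n} ν_p(Q(i)) tends to z_p/(p-1) as n → ∞. -/
/-!
For `k ≥ 1`, a root of `Q` modulo `p ^ k` lifts to exactly one root modulo `p ^ (k + 1)`
(Hensel: `Q'` is a unit there), so `Q` has `z_p` roots modulo every `p ^ k`, and the number of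
`i ≤ n` with `p ^ k ∣ Q(i)` is `n z_p / p ^ k` up to an error of at most `z_p`. Summing
`ν_p(Q(i)) = #{k ≥ 1 : p ^ k ∣ Q(i)}` over `i ≤ n` level by level gives
`n z_p ∑_{k ≥ 1} p⁻ᵏ = n z_p / (p - 1)` up to `z_p` per level, and since `|Q(i)|` grows
polynomially in `n`, only `O(log n)` levels are nonempty.
-/

open Polynomial Filter Finset Topology

lemma sq_dvd_eval_add_sub_sub {R : Type*} [CommRing R] (Q : R[X]) (x y : R) :
    y ^ 2 ∣ Q.eval (x + y) - Q.eval x - Q.derivative.eval x * y := by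
  obtain ⟨c, hc⟩ := Q.binomExpansion x y
  exact ⟨c, by rw [hc]; ring⟩

lemma pow_succ_dvd_eval_add_pow_mul_iff (Q : ℤ[X]) {p : ℤ} (hp : p ≠ 0) {k : ℕ}
    (hk : 1 ≤ k) {a c : ℤ} (hc : Q.eval a = p ^ k * c) (t : ℤ) :
    p ^ (k + 1) ∣ Q.eval (a + p ^ k * t) ↔ p ∣ c + Q.derivative.eval a * t := by
  -- Taylor: `Q(a + p^k t) ≡ Q(a) + p^k t Q'(a) (mod p^(2k))`, and `2k ≥ k + 1`.
  obtain ⟨j, rfl⟩ := Nat.exists_eq_add_of_le' hk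
  obtain ⟨e, he⟩ := sq_dvd_eval_add_sub_sub Q a (p ^ (j + 1) * t)
  have hsplit : Q.eval (a + p ^ (j + 1) * t) =
      p ^ (j + 1) * (c + Q.derivative.eval a * t) + p ^ (j + 2) * (p ^ j * t ^ 2 * e) := by
    linear_combination he + hc
  rw [hsplit, dvd_add_left (dvd_mul_right _ _), pow_succ, mul_dvd_mul_iff_left (pow_ne_zero _ hp)]

lemma dvd_eval_iff_of_modEq (Q : ℤ[X]) {m a b : ℤ} (h : a ≡ b [ZMOD m]) :
    m ∣ Q.eval a ↔ m ∣ Q.eval b :=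
  (dvd_iff_dvd_of_dvd_sub ((Int.ModEq.dvd h.symm).trans (sub_dvd_eval_sub a b Q)))

lemma aeval_intCast_zmod_eq_zero_iff (Q : ℤ[X]) (m : ℕ) (x : ℤ) :
    aeval (x : ZMod m) Q = 0 ↔ (m : ℤ) ∣ Q.eval x := by
  rw [← ZMod.intCast_zmod_eq_zero_iff_dvd]
  simp [aeval_def, eval₂_eq_eval_map]

def HasSimpleRootsMod (Q : ℤ[X]) (p : ℕ) : Prop :=
  ∀ b : ZMod p, aeval b Q = 0 → aeval b Q.derivative ≠ 0

lemma not_dvd_eval_derivative {Q : ℤ[X]} {p : ℕ} (hsimple : HasSimpleRootsMod Q p) {x : ℤ}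
    (hx : (p : ℤ) ∣ Q.eval x) : ¬ (p : ℤ) ∣ Q.derivative.eval x := by
  rw [← aeval_intCast_zmod_eq_zero_iff] at hx ⊢
  exact hsimple _ hx

lemma periodic_dvd_eval (Q : ℤ[X]) (m : ℕ) :
    Function.Periodic (fun i : ℕ => (m : ℤ) ∣ Q.eval (i : ℤ)) m := fun i =>
  propext <| dvd_eval_iff_of_modEq Q (a := ((i + m : ℕ) : ℤ)) (by simp [Int.ModEq])

def rootsMod (Q : ℤ[X]) (m : ℕ) : Finset ℕ := {b ∈ range m | (m : ℤ) ∣ Q.eval (b : ℤ)}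

@[simp]
lemma mem_rootsMod {Q : ℤ[X]} {m b : ℕ} :
    b ∈ rootsMod Q m ↔ b < m ∧ (m : ℤ) ∣ Q.eval (b : ℤ) := by
  rw [rootsMod, mem_filter, mem_range]

lemma card_rootsMod (Q : ℤ[X]) (m : ℕ) [NeZero m] :
    #(rootsMod Q m) = #{b : ZMod m | aeval b Q = 0} := by
  refine card_nbij' (fun b => (b : ZMod m)) ZMod.val ?_ ?_ ?_ ?_
  · intro b hb
    simp only [mem_coe, mem_rootsMod, mem_filter, mem_univ, true_and] at hb ⊢
    exact_mod_cast (aeval_intCast_zmod_eq_zero_iff Q m b).2 hb.2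
  · intro b hb
    simp only [mem_coe, mem_rootsMod, mem_filter, mem_univ, true_and] at hb ⊢
    refine ⟨ZMod.val_lt b, ?_⟩
    rw [← aeval_intCast_zmod_eq_zero_iff]
    simpa using hb
  · intro b hb
    exact ZMod.val_cast_of_lt (mem_rootsMod.1 hb).1
  · intro b _
    exact ZMod.natCast_zmod_val b

section Hensel

variable {Q : ℤ[X]} {p : ℕ} [hp : Fact p.Prime]

lemma eq_of_mem_rootsMod_pow_succ_of_modEq (hsimple : HasSimpleRootsMod Q p) {k : ℕ}
    (hk : 1 ≤ k) {a b : ℕ} (ha : a ∈ rootsMod Q (p ^ (k + 1)))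
    (hb : b ∈ rootsMod Q (p ^ (k + 1))) (hab : a ≡ b [MOD p ^ k]) : a = b := by
  rw [mem_rootsMod, Nat.cast_pow] at ha hb
  have hp0 : (p : ℤ) ≠ 0 := by exact_mod_cast hp.out.ne_zero
  obtain ⟨s, hs⟩ := Nat.modEq_iff_dvd.1 hab
  push_cast at hs
  obtain ⟨c, hc⟩ := (pow_dvd_pow (p : ℤ) k.le_succ).trans ha.2
  have hb_eq : (b : ℤ) = a + p ^ k * s := by linarith
  have hpc : (p : ℤ) ∣ c := by
    simpa using (pow_succ_dvd_eval_add_pow_mul_iff Q hp0 hk hc 0).1 (by simpa using ha.2)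
  have hpcs : (p : ℤ) ∣ c + Q.derivative.eval (a : ℤ) * s :=
    (pow_succ_dvd_eval_add_pow_mul_iff Q hp0 hk hc s).1 (hb_eq ▸ hb.2)
  have hps : (p : ℤ) ∣ s :=
    ((Nat.prime_iff_prime_int.1 hp.out).dvd_or_dvd ((dvd_add_right hpc).1 hpcs)).resolve_left
      (not_dvd_eval_derivative hsimple ((dvd_pow_self _ (by omega)).trans ha.2))
  refine Nat.ModEq.eq_of_lt_of_lt ?_ ha.1 hb.1
  rw [Nat.modEq_iff_dvd]
  push_cast
  rw [hs, pow_succ]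
  exact mul_dvd_mul_left _ hps

lemma exists_mem_rootsMod_pow_succ_mod_eq (hsimple : HasSimpleRootsMod Q p) {k : ℕ}
    (hk : 1 ≤ k) {r : ℕ} (hr : r ∈ rootsMod Q (p ^ k)) :
    ∃ b ∈ rootsMod Q (p ^ (k + 1)), b % p ^ k = r := by
  rw [mem_rootsMod, Nat.cast_pow] at hr
  have hp0 : (p : ℤ) ≠ 0 := by exact_mod_cast hp.out.ne_zero
  obtain ⟨c, hc⟩ := hr.2
  have hd : ((Q.derivative.eval (r : ℤ) : ℤ) : ZMod p) ≠ 0 := fun h =>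
    not_dvd_eval_derivative hsimple ((dvd_pow_self _ (by omega)).trans hr.2)
      ((ZMod.intCast_zmod_eq_zero_iff_dvd _ _).1 h)
  -- the unique `t < p` with `c + Q'(r) t ≡ 0 (mod p)`
  set t := (-(c : ZMod p) / ((Q.derivative.eval (r : ℤ) : ℤ) : ZMod p)).val
  refine ⟨r + p ^ k * t, ?_, by simp [Nat.mod_eq_of_lt hr.1]⟩
  rw [mem_rootsMod]
  constructor
  · calc r + p ^ k * t < p ^ k * (t + 1) := by linarith [hr.1]
      _ ≤ p ^ (k + 1) := by rw [pow_succ]; exact Nat.mul_le_mul_left _ (ZMod.val_lt _)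
  · push_cast
    rw [pow_succ_dvd_eval_add_pow_mul_iff Q hp0 hk hc, ← ZMod.intCast_zmod_eq_zero_iff_dvd]
    push_cast
    simp only [t, ZMod.natCast_val, ZMod.cast_id', id]
    field_simp
    ring

lemma card_rootsMod_pow_succ (hsimple : HasSimpleRootsMod Q p) {k : ℕ} (hk : 1 ≤ k) :
    #(rootsMod Q (p ^ (k + 1))) = #(rootsMod Q (p ^ k)) := by
  refine card_nbij (· % p ^ k) (fun b hb => ?_)
    (fun a ha b hb hab => eq_of_mem_rootsMod_pow_succ_of_modEq hsimple hk ha hb hab)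
    (fun r hr => exists_mem_rootsMod_pow_succ_mod_eq hsimple hk hr)
  rw [mem_coe, mem_rootsMod, Nat.cast_pow] at hb ⊢
  refine ⟨Nat.mod_lt _ (pow_pos hp.out.pos k), ?_⟩
  exact (dvd_eval_iff_of_modEq Q (by exact_mod_cast (Nat.mod_modEq b (p ^ k)).symm)).1
    ((pow_dvd_pow (p : ℤ) k.le_succ).trans hb.2)

lemma card_rootsMod_pow (hsimple : HasSimpleRootsMod Q p) {k : ℕ} (hk : 1 ≤ k) :
    #(rootsMod Q (p ^ k)) = #{b : ZMod p | aeval b Q = 0} := by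
  induction k, hk using Nat.le_induction with
  | base => rw [pow_one, card_rootsMod]
  | succ k hk ih => rw [card_rootsMod_pow_succ hsimple hk, ih]

end Hensel

section Counting

variable {C : ℕ → Prop} [DecidablePred C] {m : ℕ}

lemma card_filter_Ico_mul_of_periodic (hC : Function.Periodic C m) (a q : ℕ) :
    #{i ∈ Ico a (a + q * m) | C i} = q * Nat.count C m := by
  induction q with
  | zero => simp
  | succ q ih =>
    rw [← Ico_union_Ico_eq_Ico (b := a + q * m) (le_add_right le_rfl) (by nlinarith),
      filter_union,
      card_union_of_disjoint (disjoint_filter_filter (Ico_disjoint_Ico_consecutive _ _ _)), ih,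
      show a + (q + 1) * m = a + q * m + m by ring, Nat.filter_Ico_card_eq_of_periodic _ _ _ hC]
    ring

lemma abs_card_filter_Icc_sub_le_of_periodic (hm : 0 < m) (hC : Function.Periodic C m) (n : ℕ) :
    |(#{i ∈ Icc 1 n | C i} : ℝ) - n / m * Nat.count C m| ≤ Nat.count C m := by
  have hlow : n / m * Nat.count C m ≤ #{i ∈ Icc 1 n | C i} := by
    rw [← card_filter_Ico_mul_of_periodic hC]
    refine card_le_card (filter_subset_filter _ fun i hi => ?_)
    have := Nat.div_mul_le_self n m
    rw [mem_Ico] at hi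
    exact mem_Icc.2 ⟨hi.1, by omega⟩
  have hup : #{i ∈ Icc 1 n | C i} ≤ (n / m + 1) * Nat.count C m := by
    rw [← card_filter_Ico_mul_of_periodic hC 1]
    refine card_le_card (filter_subset_filter _ fun i hi => ?_)
    have : n < (n / m + 1) * m := mul_comm m _ ▸ Nat.lt_mul_div_succ n hm
    rw [mem_Icc] at hi
    exact mem_Ico.2 ⟨hi.1, by omega⟩
  have hq_le : ((n / m : ℕ) : ℝ) ≤ n / m := Nat.cast_div_le
  have hq_gt : (n : ℝ) / m < (n / m : ℕ) + 1 := by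
    rw [div_lt_iff₀ (by exact_mod_cast hm)]
    exact_mod_cast mul_comm m _ ▸ Nat.lt_mul_div_succ n hm
  have hlow' : ((n / m : ℕ) : ℝ) * Nat.count C m ≤ #{i ∈ Icc 1 n | C i} := by
    exact_mod_cast hlow
  have hup' : (#{i ∈ Icc 1 n | C i} : ℝ) ≤ ((n / m : ℕ) + 1) * Nat.count C m := by
    exact_mod_cast hup
  have hc : (0 : ℝ) ≤ Nat.count C m := Nat.cast_nonneg _
  rw [abs_sub_le_iff]
  constructor <;> nlinarith

end Counting

lemma sum_card_filter_lt_eq_sum_min {ι : Type*} (s : Finset ι) (v : ι → ℕ) (K : ℕ) :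
    ∑ k ∈ range K, #{i ∈ s | k < v i} = ∑ i ∈ s, min (v i) K := by
  simp_rw [card_filter]
  rw [sum_comm]
  refine sum_congr rfl fun i _ => ?_
  rw [← card_filter, ← card_range (min (v i) K)]
  congr 1
  ext k
  simp [and_comm]

lemma tendsto_of_eventually_ge_sub_div_of_eventually_le_add {f g c u : ℕ → ℝ} {L : ℝ}
    (hg : Tendsto g atTop (𝓝 L)) (hlow : ∀ K, ∀ᶠ n in atTop, g K - c K / n ≤ f n)
    (hu : Tendsto u atTop (𝓝 0)) (hup : ∀ᶠ n in atTop, f n ≤ L + u n) :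
    Tendsto f atTop (𝓝 L) := by
  rw [tendsto_order]
  constructor
  · intro a ha
    obtain ⟨K, hK⟩ := (hg.eventually (lt_mem_nhds ha)).exists
    have hlim : Tendsto (fun n : ℕ => g K - c K / n) atTop (𝓝 (g K)) := by
      simpa using tendsto_const_nhds.sub (tendsto_const_div_atTop_nhds_zero_nat (c K))
    filter_upwards [hlim.eventually (lt_mem_nhds hK), hlow K] with n h1 h2
    linarith
  · intro b hb
    have hlim : Tendsto (fun n => L + u n) atTop (𝓝 L) := by
      simpa using tendsto_const_nhds.add hu
    filter_upwards [hlim.eventually (gt_mem_nhds hb), hup] with n h1 h2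
    linarith

lemma tendsto_sum_div_of_card_lt_approx (v : ℕ → ℕ) {a : ℕ → ℝ} {L c : ℝ}
    (ha : ∀ k, 0 ≤ a k) (hL : HasSum a L)
    (hcount : ∀ k n, |(#{i ∈ Icc 1 n | k < v i} : ℝ) - n * a k| ≤ c)
    (M : ℕ → ℕ) (hM : ∀ n, ∀ i ∈ Icc 1 n, v i ≤ M n)
    (hMo : Tendsto (fun n => (M n : ℝ) / n) atTop (𝓝 0)) :
    Tendsto (fun n => (∑ i ∈ Icc 1 n, (v i : ℝ)) / n) atTop (𝓝 L) := by
  have hlayer : ∀ K n, ∑ k ∈ range K, (#{i ∈ Icc 1 n | k < v i} : ℝ) =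
      ∑ i ∈ Icc 1 n, ((min (v i) K : ℕ) : ℝ) := fun K n => by
    exact_mod_cast sum_card_filter_lt_eq_sum_min (Icc 1 n) v K
  have hcard_le : ∀ k n, (#{i ∈ Icc 1 n | k < v i} : ℝ) ≤ n * a k + c := fun k n =>
    by linarith [(abs_sub_le_iff.1 (hcount k n)).1]
  have hcard_ge : ∀ k n, n * a k - c ≤ (#{i ∈ Icc 1 n | k < v i} : ℝ) := fun k n =>
    by linarith [(abs_sub_le_iff.1 (hcount k n)).2]
  refine tendsto_of_eventually_ge_sub_div_of_eventually_le_add (hL.tendsto_sum_nat)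
    (c := fun K => K * c) (fun K => ?_) (by simpa using hMo.const_mul c) ?_
  all_goals filter_upwards [eventually_gt_atTop 0] with n hn
  all_goals have hn' : (0 : ℝ) < n := by exact_mod_cast hn
  · rw [le_div_iff₀ hn', sub_mul, div_mul_cancel₀ _ hn'.ne']
    calc (∑ k ∈ range K, a k) * n - K * c = ∑ k ∈ range K, (n * a k - c) := by
          rw [sum_sub_distrib, ← mul_sum, sum_const, card_range, nsmul_eq_mul]; ring
      _ ≤ ∑ k ∈ range K, (#{i ∈ Icc 1 n | k < v i} : ℝ) :=
          sum_le_sum fun k _ => hcard_ge k n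
      _ = ∑ i ∈ Icc 1 n, ((min (v i) K : ℕ) : ℝ) := hlayer K n
      _ ≤ ∑ i ∈ Icc 1 n, (v i : ℝ) :=
          sum_le_sum fun i _ => by exact_mod_cast min_le_left _ _
  · rw [div_le_iff₀ hn', add_mul, mul_assoc, div_mul_cancel₀ _ hn'.ne']
    calc ∑ i ∈ Icc 1 n, (v i : ℝ) = ∑ i ∈ Icc 1 n, ((min (v i) (M n) : ℕ) : ℝ) :=
          sum_congr rfl fun i hi => by rw [min_eq_left (hM n i hi)]
      _ = ∑ k ∈ range (M n), (#{i ∈ Icc 1 n | k < v i} : ℝ) := (hlayer (M n) n).symm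
      _ ≤ ∑ k ∈ range (M n), (n * a k + c) := sum_le_sum fun k _ => hcard_le k n
      _ = n * ∑ k ∈ range (M n), a k + M n * c := by
          rw [sum_add_distrib, ← mul_sum, sum_const, card_range, nsmul_eq_mul]
      _ ≤ L * n + c * M n := by
          nlinarith [sum_le_hasSum (range (M n)) (fun k _ => ha k) hL]

lemma hasSum_div_pow_succ (z : ℝ) {q : ℝ} (hq : 1 < q) :
    HasSum (fun k : ℕ => z / q ^ (k + 1)) (z / (q - 1)) := by
  rw [show (fun k : ℕ => z / q ^ (k + 1)) = fun k => z / q * q⁻¹ ^ k by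
      funext k; rw [pow_succ, inv_pow]; field_simp,
    show z / (q - 1) = z / q * (1 - q⁻¹)⁻¹ by field_simp]
  exact (hasSum_geometric_of_lt_one (by positivity) (inv_lt_one_of_one_lt₀ hq)).mul_left _

lemma natAbs_eval_le (Q : ℤ[X]) {i n : ℕ} (hi : 1 ≤ i) (hin : i ≤ n) :
    (Q.eval (i : ℤ)).natAbs ≤
      (∑ j ∈ range (Q.natDegree + 1), (Q.coeff j).natAbs) * n ^ Q.natDegree := by
  rw [eval_eq_sum_range, sum_mul]
  refine (Int.natAbs_sum_le _ _).trans (sum_le_sum fun j hj => ?_)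
  rw [Int.natAbs_mul, Int.natAbs_pow, Int.natAbs_natCast]
  gcongr
  · omega
  · exact Nat.lt_succ_iff.1 (mem_range.1 hj)

lemma padicValInt_le_natLog (p : ℕ) {x : ℤ} {B : ℕ} (hx : x.natAbs ≤ B) :
    padicValInt p x ≤ Nat.log p B :=
  (padicValNat_le_nat_log _).trans (Nat.log_mono_right hx)

lemma tendsto_natLog_mul_pow_div (b B d : ℕ) :
    Tendsto (fun n : ℕ => (Nat.log b (B * n ^ d) : ℝ) / n) atTop (𝓝 0) := by
  rcases Nat.eq_zero_or_pos B with rfl | hB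
  · simp
  have hlog : Tendsto (fun n : ℕ => Real.log n / n) atTop (𝓝 0) :=
    Real.isLittleO_log_id_atTop.tendsto_div_nhds_zero.comp tendsto_natCast_atTop_atTop
  have hbound : Tendsto
      (fun n : ℕ => Real.log B / Real.log b / n + d / Real.log b * (Real.log n / n))
      atTop (𝓝 0) := by
    simpa using (tendsto_const_div_atTop_nhds_zero_nat _).add (hlog.const_mul (d / Real.log b))
  refine tendsto_of_tendsto_of_tendsto_of_le_of_le' tendsto_const_nhds hbound
    (Eventually.of_forall fun n => by positivity) ?_
  filter_upwards [eventually_gt_atTop 0] with n hn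
  calc (Nat.log b (B * n ^ d) : ℝ) / n ≤ Real.logb b ((B * n ^ d : ℕ) : ℝ) / n := by
        gcongr; exact Real.natLog_le_logb _ _
    _ = _ := by
        push_cast
        rw [Real.logb, Real.log_mul (by positivity) (by positivity), Real.log_pow]
        ring

lemma abs_card_lt_padicValInt_eval_sub_le {Q : ℤ[X]} {p : ℕ} [hp : Fact p.Prime]
    (hsimple : HasSimpleRootsMod Q p) (hne : ∀ i : ℕ, 1 ≤ i → Q.eval (i : ℤ) ≠ 0)
    (k n : ℕ) :
    |(#{i ∈ Icc 1 n | k < padicValInt p (Q.eval ((i : ℕ) : ℤ))} : ℝ) -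
        n * (#{b : ZMod p | aeval b Q = 0} / (p : ℝ) ^ (k + 1))| ≤
      #{b : ZMod p | aeval b Q = 0} := by
  have hval : ∀ i ∈ Icc 1 n, k < padicValInt p (Q.eval (i : ℤ)) ↔
      ((p ^ (k + 1) : ℕ) : ℤ) ∣ Q.eval (i : ℤ) := fun i hi => by
    rw [Nat.cast_pow, padicValInt_dvd_iff, or_iff_right (hne i (mem_Icc.1 hi).1)]
    omega
  have hcount : Nat.count (fun i : ℕ => ((p ^ (k + 1) : ℕ) : ℤ) ∣ Q.eval (i : ℤ))
      (p ^ (k + 1)) = #{b : ZMod p | aeval b Q = 0} := by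
    rw [Nat.count_eq_card_filter_range]
    exact card_rootsMod_pow hsimple k.succ_pos
  have h := abs_card_filter_Icc_sub_le_of_periodic (pow_pos hp.out.pos (k + 1))
    (periodic_dvd_eval Q (p ^ (k + 1))) n
  rw [hcount] at h
  rw [filter_congr hval]
  convert h using 3
  push_cast
  ring

theorem main_theorem (Q : Polynomial ℤ) (p : ℕ) [hp : Fact p.Prime]
    (hHensel : ∀ b : ZMod p, aeval b Q = 0 → aeval b (derivative Q) ≠ 0)
    (hne : ∀ i : ℕ, 1 ≤ i → Q.eval (i : ℤ) ≠ 0) :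
    Tendsto (fun n : ℕ => (∑ i ∈ Finset.Icc 1 n, (padicValInt p (Q.eval (i : ℤ)) : ℝ)) / n)
      atTop
      (nhds (((Finset.univ.filter (fun b : ZMod p => aeval b Q = 0)).card : ℝ) / (p - 1))) := by
  set B : ℕ := ∑ j ∈ range (Q.natDegree + 1), (Q.coeff j).natAbs
  refine tendsto_sum_div_of_card_lt_approx _ (fun k => by positivity)
    (hasSum_div_pow_succ _ (by exact_mod_cast hp.out.one_lt))
    (abs_card_lt_padicValInt_eval_sub_le hHensel hne) (fun n => Nat.log p (B * n ^ Q.natDegree))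
    (fun n i hi => ?_) (tendsto_natLog_mul_pow_div p B Q.natDegree)
  exact padicValInt_le_natLog p (natAbs_eval_le Q (mem_Icc.1 hi).1 (mem_Icc.1 hi).2)
end

section
/- Let H(x) = x^4 - x^3 + 3x^2 - 3x + 3. Then (1/n) Σ_{i=1}^{n} ν_3(H(i)) tends to 5/6 as n → ∞. -/
/-!
Modulo 3 we have `H ≡ x³(x - 1)`. Integers `x ≡ 2` contribute `ν₃ = 0`, integers `x ≡ 0`
have `H(x) ≡ 3 (mod 9)` and contribute `ν₃ = 1`, while at the simple root `1` the derivative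
`H'(1) = 4` is prime to `3`, so by Hensel lifting the solutions of `3ᵏ ∣ H(x)` for `k ≥ 2` form a
single residue class modulo `3ᵏ`. Writing `ν₃(H(i)) = #{k ≥ 1 | 3ᵏ ∣ H(i)}` and counting each
residue class in `[1, n]` up to an error of `1` gives
`∑_{i ≤ n} ν₃(H(i)) = (2/3 + ∑_{k ≥ 2} 3⁻ᵏ) n + O(log n) = 5n/6 + O(log n)`.
-/

open Filter Finset Polynomial

namespace Polynomial

variable {R : Type*} [CommRing R] {p : R}

theorem isCoprime_eval_of_dvd_sub (f : R[X]) {a b : R} (hf : IsCoprime (f.eval a) p)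
    (hab : p ∣ b - a) : IsCoprime (f.eval b) p := by
  obtain ⟨c, hc⟩ := hab.trans (sub_dvd_eval_sub b a f)
  simpa [← hc] using hf.add_mul_left_left c

theorem pow_dvd_eval_iff_of_isCoprime (f : R[X]) {a x : R} {k : ℕ} (hfa : p ^ k ∣ f.eval a)
    (hf' : IsCoprime (f.derivative.eval a) p) (hx : p ∣ x - a) :
    p ^ k ∣ f.eval x ↔ p ^ k ∣ x - a := by
  obtain ⟨c, hc⟩ := f.binomExpansion a (x - a)
  obtain ⟨t, ht⟩ := hx
  have hunit : IsCoprime (f.derivative.eval a + c * (x - a)) p := by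
    simpa [ht, mul_left_comm c p t] using hf'.add_mul_left_left (c * t)
  have hfx : f.eval x = f.eval a + (x - a) * (f.derivative.eval a + c * (x - a)) := by
    rw [add_sub_cancel] at hc; rw [hc]; ring
  rw [hfx, dvd_add_right hfa]
  exact ⟨(hunit.symm.pow_left).dvd_of_dvd_mul_right, (Dvd.dvd.mul_right · _)⟩

theorem exists_pow_dvd_eval (f : R[X]) {a : R} (hfa : p ∣ f.eval a)
    (hf' : IsCoprime (f.derivative.eval a) p) (k : ℕ) : ∃ b, p ∣ b - a ∧ p ^ k ∣ f.eval b := by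
  induction k with
  | zero => exact ⟨a, by simp, by simp⟩
  | succ k ih =>
    obtain ⟨b, hba, hfb⟩ := ih
    have hp : p ∣ f.eval b := by
      simpa using dvd_add (hba.trans (sub_dvd_eval_sub b a f)) hfa
    obtain ⟨u, v, huv⟩ := f.derivative.isCoprime_eval_of_dvd_sub hf' hba
    obtain ⟨c, hc⟩ := f.binomExpansion b (-(u * f.eval b))
    -- Newton step: `u` inverts `f'(b)` modulo `p`
    refine ⟨b - u * f.eval b, by rw [sub_right_comm]; exact dvd_sub hba (hp.mul_left u), ?_⟩
    have : f.eval (b - u * f.eval b) = f.eval b * (v * p + c * u ^ 2 * f.eval b) := by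
      rw [sub_eq_add_neg, hc]; linear_combination (-f.eval b) * huv
    rw [this, pow_succ]
    exact mul_dvd_mul hfb (dvd_add (dvd_mul_left p v) (hp.mul_left _))

end Polynomial

theorem padicValInt_eq_card_filter_pow_dvd {p : ℕ} [Fact p.Prime] {m : ℤ} (hm : m ≠ 0) {K : ℕ}
    (hK : padicValInt p m ≤ K) : padicValInt p m = #{k ∈ Icc 1 K | (p : ℤ) ^ k ∣ m} := by
  have : {k ∈ Icc 1 K | (p : ℤ) ^ k ∣ m} = Icc 1 (padicValInt p m) := by
    ext k
    simp only [mem_filter, mem_Icc, padicValInt_dvd_iff, hm, false_or]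
    omega
  simp [this]

theorem sum_padicValInt_eq_sum_card_filter_pow_dvd {ι : Type*} {p : ℕ} [Fact p.Prime]
    (s : Finset ι) (f : ι → ℤ) (hf : ∀ i ∈ s, f i ≠ 0) {K : ℕ}
    (hK : ∀ i ∈ s, padicValInt p (f i) ≤ K) :
    ∑ i ∈ s, padicValInt p (f i) = ∑ k ∈ Icc 1 K, #{i ∈ s | (p : ℤ) ^ k ∣ f i} := by
  rw [sum_congr rfl fun i hi => padicValInt_eq_card_filter_pow_dvd (hf i hi) (hK i hi)]
  exact sum_card_bipartiteAbove_eq_sum_card_bipartiteBelow _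

theorem abs_card_filter_modEq_sub_le (n : ℕ) {r : ℕ} (hr : 0 < r) (v : ℤ) :
    |(#{i ∈ Icc 1 n | ((i : ℕ) : ℤ) ≡ v [ZMOD r]} : ℝ) - n / r| ≤ 1 := by
  obtain ⟨w, hw⟩ := Int.eq_ofNat_of_zero_le (Int.emod_nonneg v (b := r) (by exact_mod_cast hr.ne'))
  have hfilter : {i ∈ Icc 1 n | ((i : ℕ) : ℤ) ≡ v [ZMOD r]} = {i ∈ Ioc 0 n | i ≡ w [MOD r]} := by
    ext i
    rw [mem_filter, mem_filter, ← Int.natCast_modEq_iff, ← hw, ← Icc_add_one_left_eq_Ioc, zero_add]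
    exact and_congr_right fun _ => ⟨fun h => h.trans (Int.mod_modEq v r).symm,
      fun h => h.trans (Int.mod_modEq v r)⟩
  have hcard := Nat.Ioc_filter_modEq_card 0 n hr w
  rw [max_eq_left (sub_nonneg.mpr (by gcongr; simp))] at hcard
  set A : ℚ := ((n : ℕ) - w : ℚ) / r
  set B : ℚ := ((0 : ℕ) - w : ℚ) / r
  have hA : (A : ℝ) - B = n / r := by simp only [A, B]; push_cast; ring
  have hq : (#{i ∈ Ioc 0 n | i ≡ w [MOD r]} : ℝ) = ⌊A⌋ - ⌊B⌋ := by exact_mod_cast hcard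
  have h1 : (⌊A⌋ : ℝ) ≤ A := by exact_mod_cast Int.floor_le A
  have h2 : (A : ℝ) < ⌊A⌋ + 1 := by exact_mod_cast Int.lt_floor_add_one A
  have h3 : (⌊B⌋ : ℝ) ≤ B := by exact_mod_cast Int.floor_le B
  have h4 : (B : ℝ) < ⌊B⌋ + 1 := by exact_mod_cast Int.lt_floor_add_one B
  rw [hfilter, hq, abs_le]
  constructor <;> linarith

noncomputable def H : ℤ[X] := X ^ 4 - X ^ 3 + 3 * X ^ 2 - 3 * X + 3

theorem eval_H (x : ℤ) : H.eval x = x ^ 4 - x ^ 3 + 3 * x ^ 2 - 3 * x + 3 := by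
  simp [H]

theorem eval_H_pos (x : ℤ) : 0 < H.eval x := by
  rw [eval_H]; nlinarith [sq_nonneg (2 * x ^ 2 - x), sq_nonneg (11 * x - 6)]

theorem eval_H_le {n i : ℕ} (hi : i ∈ Icc 1 n) : H.eval (i : ℤ) ≤ 7 * n ^ 4 := by
  obtain ⟨h1, h2⟩ := mem_Icc.mp hi
  have h1' : (1 : ℤ) ≤ i := by exact_mod_cast h1
  have h2' : (i : ℤ) ≤ n := by exact_mod_cast h2
  rw [eval_H]
  nlinarith [pow_le_pow_left₀ (by linarith) h2' 4, one_le_pow₀ (n := 4) h1',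
    pow_le_pow_right₀ h1' (show 2 ≤ 4 by norm_num), pow_nonneg (by linarith : (0 : ℤ) ≤ i) 3]

theorem intCast_eval_H {n : ℕ} (x : ℤ) :
    ((H.eval x : ℤ) : ZMod n) = (x : ZMod n) ^ 4 - (x : ZMod n) ^ 3 + 3 * (x : ZMod n) ^ 2
      - 3 * (x : ZMod n) + 3 := by
  simp [eval_H]

theorem three_dvd_eval_H_iff (x : ℤ) : 3 ∣ H.eval x ↔ ¬ x ≡ 2 [ZMOD 3] := by
  have key : ∀ z : ZMod 3, z ^ 4 - z ^ 3 + 3 * z ^ 2 - 3 * z + 3 = 0 ↔ ¬ z = 2 := by decide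
  have := key x
  rw [← intCast_eval_H, ZMod.intCast_zmod_eq_zero_iff_dvd, ← Int.cast_ofNat,
    ZMod.intCast_eq_intCast_iff] at this
  exact_mod_cast this

theorem three_dvd_sub_one_of_nine_dvd_eval_H {x : ℤ} (h : 9 ∣ H.eval x) : 3 ∣ x - 1 := by
  have key : ∀ z : ZMod 9, z ^ 4 - z ^ 3 + 3 * z ^ 2 - 3 * z + 3 = 0 →
      ZMod.castHom (by norm_num : 3 ∣ 9) (ZMod 3) (z - 1) = 0 := by decide
  have := key x (by rw [← intCast_eval_H, ZMod.intCast_zmod_eq_zero_iff_dvd]; exact_mod_cast h)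
  rw [map_sub, map_intCast, map_one] at this
  exact_mod_cast (ZMod.intCast_zmod_eq_zero_iff_dvd (x - 1) 3).mp (by exact_mod_cast this)

theorem exists_pow_dvd_eval_H_iff {k : ℕ} (hk : 2 ≤ k) :
    ∃ b : ℤ, ∀ x : ℤ, 3 ^ k ∣ H.eval x ↔ x ≡ b [ZMOD 3 ^ k] := by
  have hroot : 3 ∣ H.eval 1 := by norm_num [eval_H]
  have hderiv : IsCoprime (H.derivative.eval 1) 3 := by
    norm_num [H, Int.isCoprime_iff_gcd_eq_one]
  obtain ⟨b, hb1, hbk⟩ := H.exists_pow_dvd_eval hroot hderiv k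
  refine ⟨b, fun x => ?_⟩
  rw [Int.modEq_comm, Int.modEq_iff_dvd]
  by_cases hx : 3 ∣ x - 1
  · exact H.pow_dvd_eval_iff_of_isCoprime hbk (H.derivative.isCoprime_eval_of_dvd_sub hderiv hb1)
      (by simpa using dvd_sub hx hb1)
  · have h9 : (9 : ℤ) ∣ 3 ^ k := pow_dvd_pow 3 hk
    refine iff_of_false (fun h => hx (three_dvd_sub_one_of_nine_dvd_eval_H (h9.trans h)))
      fun h => hx ?_
    simpa using dvd_add ((dvd_pow_self 3 (by omega)).trans h) hb1

theorem abs_card_three_dvd_eval_H_sub_le (n : ℕ) :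
    |(#{i ∈ Icc 1 n | 3 ∣ H.eval ((i : ℕ) : ℤ)} : ℝ) - 2 / 3 * n| ≤ 1 := by
  have hsplit := card_filter_add_card_filter_not (s := Icc 1 n) (fun i : ℕ => (i : ℤ) ≡ 2 [ZMOD 3])
  simp only [← three_dvd_eval_H_iff, Nat.card_Icc, add_tsub_cancel_right] at hsplit
  have hsum : (#{i ∈ Icc 1 n | ((i : ℕ) : ℤ) ≡ 2 [ZMOD 3]} : ℝ)
      + #{i ∈ Icc 1 n | 3 ∣ H.eval ((i : ℕ) : ℤ)} = n := by exact_mod_cast hsplit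
  have h2 := abs_le.mp (abs_card_filter_modEq_sub_le n (r := 3) (by norm_num) 2)
  push_cast at h2
  rw [abs_le]
  constructor <;> linarith [h2.1, h2.2]

theorem abs_card_pow_dvd_eval_H_sub_le (n : ℕ) {k : ℕ} (hk : 2 ≤ k) :
    |(#{i ∈ Icc 1 n | 3 ^ k ∣ H.eval ((i : ℕ) : ℤ)} : ℝ) - n / 3 ^ k| ≤ 1 := by
  obtain ⟨b, hb⟩ := exists_pow_dvd_eval_H_iff hk
  simpa [hb] using abs_card_filter_modEq_sub_le n (r := 3 ^ k) (by positivity) b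

theorem padicValInt_eval_H_le {n K i : ℕ} (hK : 7 * n ^ 4 < 3 ^ K) (hi : i ∈ Icc 1 n) :
    padicValInt 3 (H.eval (i : ℤ)) ≤ K := by
  have hdvd : (3 : ℤ) ^ padicValInt 3 (H.eval (i : ℤ)) ≤ H.eval (i : ℤ) :=
    Int.le_of_dvd (eval_H_pos _) (by exact_mod_cast padicValInt_dvd (H.eval (i : ℤ)))
  have hK' : (7 * n ^ 4 : ℤ) < 3 ^ K := by exact_mod_cast hK
  exact ((pow_lt_pow_iff_right₀ (by norm_num : (1 : ℤ) < 3)).mp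
    (hdvd.trans_lt ((eval_H_le hi).trans_lt hK'))).le

theorem sum_Ioc_one_div_three_pow {K : ℕ} (hK : 1 ≤ K) :
    ∑ k ∈ Ioc 1 K, (1 : ℝ) / 3 ^ k = 1 / 6 - 1 / (2 * 3 ^ K) := by
  induction K, hK using Nat.le_induction with
  | base => norm_num
  | succ K hK ih =>
    rw [sum_Ioc_succ_top hK, ih]
    field_simp
    ring

theorem abs_sum_padicValInt_eval_H_sub_le {n : ℕ} (hn : 1 ≤ n) :
    |∑ i ∈ Icc 1 n, (padicValInt 3 (H.eval (i : ℤ)) : ℝ) - 5 / 6 * n|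
      ≤ Nat.log 3 (7 * n ^ 4) + 3 := by
  set K := Nat.log 3 (7 * n ^ 4) + 1 with hK_def
  have hK : 7 * n ^ 4 < 3 ^ K := Nat.lt_pow_succ_log_self (by norm_num) _
  have hS : ∑ i ∈ Icc 1 n, (padicValInt 3 (H.eval (i : ℤ)) : ℝ)
      = ∑ k ∈ Icc 1 K, (#{i ∈ Icc 1 n | 3 ^ k ∣ H.eval ((i : ℕ) : ℤ)} : ℝ) := by
    rw [← Nat.cast_sum, sum_padicValInt_eq_sum_card_filter_pow_dvd _ _
      (fun i _ => (eval_H_pos _).ne') fun i hi => padicValInt_eval_H_le hK hi]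
    push_cast; rfl
  have herr : |∑ k ∈ Ioc 1 K, ((#{i ∈ Icc 1 n | 3 ^ k ∣ H.eval ((i : ℕ) : ℤ)} : ℝ) - n / 3 ^ k)|
      ≤ K := by
    refine (abs_sum_le_sum_abs _ _).trans ((sum_le_sum fun k hk =>
      abs_card_pow_dvd_eval_H_sub_le n (mem_Ioc.mp hk).1).trans ?_)
    simp
  have hgeom : ∑ k ∈ Ioc 1 K, (n : ℝ) / 3 ^ k = n / 6 - n / (2 * 3 ^ K) := by
    simp_rw [div_eq_mul_one_div (n : ℝ)]
    rw [← mul_sum, sum_Ioc_one_div_three_pow (by omega)]; ring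
  have htail : (n : ℝ) / (2 * 3 ^ K) ≤ 1 := by
    rw [div_le_one (by positivity)]
    have hnK : n ≤ 3 ^ K := by have := Nat.le_self_pow (by norm_num : 4 ≠ 0) n; omega
    have : (n : ℝ) ≤ 3 ^ K := by exact_mod_cast hnK
    linarith [pow_pos (three_pos : (0 : ℝ) < 3) K]
  have h1 := abs_le.mp (abs_card_three_dvd_eval_H_sub_le n)
  rw [sum_sub_distrib, hgeom] at herr
  rw [hS, Icc_eq_cons_Ioc (by omega), sum_cons, pow_one, abs_le]
  have h2 := abs_le.mp herr
  push_cast [hK_def] at h2 ⊢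
  have : (0 : ℝ) ≤ n / (2 * 3 ^ K) := by positivity
  constructor <;> linarith [h1.1, h1.2, h2.1, h2.2]

theorem tendsto_natLog_mul_pow_div_atTop (b : ℕ) {c : ℕ} (hc : c ≠ 0) (d : ℕ) :
    Tendsto (fun n : ℕ => (Nat.log b (c * n ^ d) : ℝ) / n) atTop (nhds 0) := by
  have hlog : Tendsto (fun n : ℕ => Real.log n / n) atTop (nhds 0) :=
    Real.isLittleO_log_id_atTop.tendsto_div_nhds_zero.comp tendsto_natCast_atTop_atTop
  have hlim : Tendsto (fun n : ℕ => Real.logb b c / n + d / Real.log b * (Real.log n / n))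
      atTop (nhds 0) := by
    simpa using (tendsto_const_div_atTop_nhds_zero_nat _).add (hlog.const_mul _)
  refine squeeze_zero' (Eventually.of_forall fun n => by positivity) ?_ hlim
  filter_upwards [eventually_ge_atTop 1] with n hn
  calc (Nat.log b (c * n ^ d) : ℝ) / n ≤ Real.logb b (c * n ^ d : ℕ) / n := by
        gcongr; exact Real.natLog_le_logb _ _
    _ = _ := by
        push_cast
        rw [Real.logb_mul (by exact_mod_cast hc) (by positivity), Real.logb_pow]
        simp only [Real.logb]
        ring

theorem val3_H_asymptotic :
    Tendsto (fun n : ℕ =>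
        (∑ i ∈ Finset.Icc 1 n,
          (padicValInt 3 ((i : ℤ) ^ 4 - i ^ 3 + 3 * i ^ 2 - 3 * i + 3) : ℝ)) / n)
      atTop (nhds (5 / 6)) := by
  simp_rw [← eval_H]
  have hlim : Tendsto (fun n : ℕ => (Nat.log 3 (7 * n ^ 4) : ℝ) / n + 3 / n) atTop (nhds 0) := by
    simpa using (tendsto_natLog_mul_pow_div_atTop 3 (by norm_num) 4).add
      (tendsto_const_div_atTop_nhds_zero_nat 3)
  rw [tendsto_iff_norm_sub_tendsto_zero]
  refine squeeze_zero' (Eventually.of_forall fun n => norm_nonneg _) ?_ hlim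
  filter_upwards [eventually_ge_atTop 1] with n hn
  have hn' : (0 : ℝ) < n := by exact_mod_cast hn
  rw [Real.norm_eq_abs, ← add_div, div_sub' hn'.ne', abs_div, abs_of_pos hn', mul_comm]
  gcongr
  exact abs_sum_padicValInt_eval_H_sub_le hn
end

section
/- Let Q(x) = x^5 + 2x^3 + 3. Then (1/n) Σ_{i=1}^{n} ν_29(Q(i)) tends to 57/812 as n → ∞. -/
/-!
Over `ℤ`, `x ^ 5 + 2 x ^ 3 + 3 = (x + 1) H(x)` with `H = quarticFactor` positive, so `ν₂₉` of the
value at `i` is `ν₂₉(i + 1) + ν₂₉(H(i))`. Modulo 29 the only root of `H` is 14, and there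
`H ≡ 58 (mod 29²)`, so `ν₂₉(H(i))` is the indicator of `i ≡ 14 (mod 29)`. Summing over `1 ≤ i ≤ n`
gives `ν₂₉((n + 1)!) + ⌊(n + 15) / 29⌋`. By Legendre's formula `28 ν₂₉(m!) = m - s₂₉(m)`, where the
digit sum `s₂₉(m) = O(log m)`, so the first term is `n / 28 + o(n)` and the second `n / 29 + O(1)`;
and `1 / 28 + 1 / 29 = 57 / 812`.
-/

open Filter Topology Asymptotics

theorem tendsto_div_natCast_of_abs_sub_le {f : ℕ → ℝ} {a C : ℝ}
    (h : ∀ n : ℕ, |f n - a * n| ≤ C) :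
    Tendsto (fun n : ℕ => f n / n) atTop (𝓝 a) := by
  rw [tendsto_iff_norm_sub_tendsto_zero]
  refine squeeze_zero' (Eventually.of_forall fun n => norm_nonneg _) ?_
    (tendsto_const_div_atTop_nhds_zero_nat C)
  filter_upwards [eventually_ne_atTop 0] with n hn
  have hn' : (0 : ℝ) < n := by positivity
  rw [Real.norm_eq_abs, ← mul_div_cancel_right₀ a hn'.ne', ← sub_div, abs_div,
    abs_of_pos hn']
  exact div_le_div_of_nonneg_right (h n) hn'.le

theorem Filter.Tendsto.comp_add_one_div_natCast {f : ℕ → ℝ} {a : ℝ}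
    (h : Tendsto (fun n : ℕ => f n / n) atTop (𝓝 a)) :
    Tendsto (fun n : ℕ => f (n + 1) / n) atTop (𝓝 a) := by
  have := ((tendsto_add_atTop_iff_nat 1).mpr h).mul
    ((tendsto_one_div_atTop_nhds_zero_nat (𝕜 := ℝ)).const_add 1)
  rw [add_zero, mul_one] at this
  refine this.congr' ?_
  filter_upwards [eventually_ne_atTop 0] with n hn
  have hn' : (n : ℝ) ≠ 0 := Nat.cast_ne_zero.mpr hn
  push_cast
  field_simp

theorem tendsto_add_div_div_natCast (c : ℕ) {r : ℕ} (hr : 0 < r) :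
    Tendsto (fun n : ℕ => (((n + c) / r : ℕ) : ℝ) / n) atTop (𝓝 (1 / r)) := by
  refine tendsto_div_natCast_of_abs_sub_le (C := c + 1) fun n => ?_
  have hr' : (1 : ℝ) ≤ r := by exact_mod_cast hr
  have hr0 : (r : ℝ) ≠ 0 := by linarith
  have hle : (((n + c) / r : ℕ) : ℝ) * r ≤ n + c := by
    exact_mod_cast Nat.div_mul_le_self (n + c) r
  have hlt : (n + c : ℝ) < (((n + c) / r : ℕ) : ℝ) * r + r := by
    exact_mod_cast Nat.lt_div_mul_add hr
  rw [show (((n + c) / r : ℕ) : ℝ) - 1 / r * n = ((((n + c) / r : ℕ) : ℝ) * r - n) / r by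
    field_simp, abs_div, Nat.abs_cast, div_le_iff₀ (by linarith), abs_le]
  constructor <;> nlinarith

theorem Nat.digits_sum_le_mul_logb {b : ℕ} (hb : 1 < b) (n : ℕ) :
    ((b.digits n).sum : ℝ) ≤ (b - 1) * (Real.logb b n + 1) := by
  rcases eq_or_ne n 0 with rfl | hn
  · simpa using hb.le
  have hdigit : ∀ d ∈ b.digits n, d ≤ b - 1 := fun d hd =>
    Nat.le_sub_one_of_lt (Nat.digits_lt_base hb hd)
  have hsum : (b.digits n).sum ≤ (Nat.log b n + 1) * (b - 1) := by
    simpa [Nat.length_digits b n hb hn] using List.sum_le_card_nsmul _ _ hdigit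
  calc ((b.digits n).sum : ℝ) ≤ ((Nat.log b n + 1 : ℕ) : ℝ) * ((b - 1 : ℕ) : ℝ) := by
        exact_mod_cast hsum
    _ ≤ (b - 1) * (Real.logb b n + 1) := by
        rw [Nat.cast_sub hb.le, mul_comm]
        push_cast
        have : (1 : ℝ) ≤ b := by exact_mod_cast hb.le
        gcongr
        exact Real.natLog_le_logb n b

theorem Nat.tendsto_digits_sum_div {b : ℕ} (hb : 1 < b) :
    Tendsto (fun n : ℕ => ((b.digits n).sum : ℝ) / n) atTop (𝓝 0) := by
  have hlogb : (fun x : ℝ => (b - 1) * (Real.logb b x + 1)) =o[atTop] id :=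
    (((Real.isLittleO_log_id_atTop.const_mul_left (Real.log b)⁻¹).congr_left
      fun x => by rw [Real.logb, div_eq_inv_mul]).add
      (isLittleO_const_id_atTop 1)).const_mul_left _
  refine tendsto_of_tendsto_of_tendsto_of_le_of_le tendsto_const_nhds
    (hlogb.comp_tendsto tendsto_natCast_atTop_atTop).tendsto_div_nhds_zero
    (fun n => by positivity) fun n => ?_
  exact div_le_div_of_nonneg_right (Nat.digits_sum_le_mul_logb hb n) n.cast_nonneg

theorem tendsto_padicValNat_factorial_div (p : ℕ) [hp : Fact p.Prime] :
    Tendsto (fun n : ℕ => (padicValNat p n.factorial : ℝ) / n) atTop (𝓝 (p - 1)⁻¹) := by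
  have hp1 : (p - 1 : ℝ) ≠ 0 := sub_ne_zero.mpr (by exact_mod_cast hp.out.one_lt.ne')
  have legendre (n : ℕ) :
      (p - 1 : ℝ) * padicValNat p n.factorial = n - (p.digits n).sum := by
    have := congrArg (Nat.cast : ℕ → ℝ) (sub_one_mul_padicValNat_factorial (p := p) n)
    rwa [Nat.cast_mul, Nat.cast_sub (Nat.digit_sum_le p n), Nat.cast_sub hp.out.one_le,
      Nat.cast_one] at this
  have hlim := (tendsto_const_nhds (x := (1 : ℝ)).sub
    (Nat.tendsto_digits_sum_div hp.out.one_lt)).const_mul (p - 1 : ℝ)⁻¹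
  rw [sub_zero, mul_one] at hlim
  refine hlim.congr' ?_
  filter_upwards [eventually_ne_atTop 0] with n hn
  have hn' : (n : ℝ) ≠ 0 := Nat.cast_ne_zero.mpr hn
  field_simp
  linarith [legendre n]

theorem sum_Icc_padicValNat_add_one (p n : ℕ) [Fact p.Prime] :
    ∑ i ∈ Finset.Icc 1 n, padicValNat p (i + 1) = padicValNat p (n + 1).factorial := by
  induction n with
  | zero => simp
  | succ n ih =>
    rw [Finset.sum_Icc_succ_top (by omega), ih, Nat.factorial_succ (n + 1),
      padicValNat.mul (by omega) (Nat.factorial_ne_zero _), add_comm]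

instance fact_prime_twentyNine : Fact (Nat.Prime 29) := ⟨by norm_num⟩

def quarticFactor (x : ℤ) : ℤ := x ^ 4 - x ^ 3 + 3 * x ^ 2 - 3 * x + 3

theorem pow_five_add_two_mul_pow_three_add_three (x : ℤ) :
    x ^ 5 + 2 * x ^ 3 + 3 = (x + 1) * quarticFactor x := by
  unfold quarticFactor; ring

theorem quarticFactor_pos (x : ℤ) : 0 < quarticFactor x := by
  unfold quarticFactor
  nlinarith [sq_nonneg (x ^ 2 - x), sq_nonneg (x - 1), sq_nonneg x]

theorem exists_quarticFactor_eq_of_emod_eq {x : ℤ} (hx : x % 29 = 14) :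
    ∃ m : ℤ, quarticFactor x = (29 * m + 2) * 29 := by
  obtain ⟨q, rfl⟩ : ∃ q, x = 29 * q + 14 := ⟨x / 29, by omega⟩
  exact ⟨841 * q ^ 4 + 1595 * q ^ 3 + 1137 * q ^ 2 + 361 * q + 43, by
    unfold quarticFactor; ring⟩

theorem padicValInt_quarticFactor (x : ℤ) :
    padicValInt 29 (quarticFactor x) = if x % 29 = 14 then 1 else 0 := by
  split_ifs with hx
  · obtain ⟨m, hm⟩ := exists_quarticFactor_eq_of_emod_eq hx
    rw [hm, padicValInt.mul (by omega) (by norm_num), padicValInt.eq_zero_of_not_dvd (by omega)]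
    simpa using padicValInt.self (p := 29) (by norm_num)
  · refine padicValInt.eq_zero_of_not_dvd fun hdvd => hx ?_
    have hroot : ∀ r : ZMod 29, r ^ 4 - r ^ 3 + 3 * r ^ 2 - 3 * r + 3 = 0 → r = 14 := by
      decide
    have := hroot x (by
      simpa [quarticFactor] using (ZMod.intCast_zmod_eq_zero_iff_dvd _ 29).mpr hdvd)
    exact (ZMod.intCast_eq_intCast_iff' x 14 29).mp (by simpa using this)

theorem padicValInt_pow_five_add_two_mul_pow_three_add_three (i : ℕ) :
    padicValInt 29 ((i : ℤ) ^ 5 + 2 * i ^ 3 + 3) =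
      padicValNat 29 (i + 1) + if (i : ℤ) % 29 = 14 then 1 else 0 := by
  rw [pow_five_add_two_mul_pow_three_add_three, padicValInt.mul (by positivity)
    (quarticFactor_pos _).ne', padicValInt_quarticFactor]
  norm_cast

theorem sum_Icc_ite_emod_twentyNine_eq_fourteen (n : ℕ) :
    ∑ i ∈ Finset.Icc 1 n, (if (i : ℤ) % 29 = 14 then 1 else 0) = (n + 15) / 29 := by
  induction n with
  | zero => simp
  | succ n ih =>
    rw [Finset.sum_Icc_succ_top (by omega), ih]
    split_ifs <;> omega

theorem val29_Q_asymptotic :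
    Tendsto (fun n : ℕ =>
        (∑ i ∈ Finset.Icc 1 n, (padicValInt 29 ((i : ℤ) ^ 5 + 2 * i ^ 3 + 3) : ℝ)) / n)
      atTop (nhds (57 / 812)) := by
  have hsum (n : ℕ) :
      ∑ i ∈ Finset.Icc 1 n, padicValInt 29 ((i : ℤ) ^ 5 + 2 * i ^ 3 + 3) =
        padicValNat 29 (n + 1).factorial + (n + 15) / 29 := by
    simp only [padicValInt_pow_five_add_two_mul_pow_three_add_three, Finset.sum_add_distrib,
      sum_Icc_padicValNat_add_one, sum_Icc_ite_emod_twentyNine_eq_fourteen]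
  have hlim := (tendsto_padicValNat_factorial_div 29).comp_add_one_div_natCast.add
    (tendsto_add_div_div_natCast 15 (r := 29) (by norm_num))
  convert hlim using 2 with n
  · rw [← Nat.cast_sum, hsum, Nat.cast_add, add_div]
  · norm_num
end

section
/- Let p and q be distinct primes with p odd. Then (1/n) Σ_{i=1}^{n} ν_q(i^p + 1) tends to gcd(p, q-1)/(q-1) as n → ∞. -/
/-!
Since `ν_q(m) = #{k ≥ 1 | q ^ k ∣ m}`, the sum `∑_{i ≤ n} ν_q(i ^ p + 1)` equals
`∑_{k ≥ 1} #{i ≤ n | i ^ p ≡ -1 [MOD q ^ k]}`, where only `k ≤ p (log_q n + 1)` contribute.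
As `p` is odd, `x ↦ -x` matches the solutions of `x ^ p = -1` in `ZMod (q ^ k)` with the `p`-th
roots of unity in `(ZMod (q ^ k))ˣ`, a group of order `q ^ (k - 1) (q - 1)` that is cyclic for
odd `q` and of order prime to `p` for `q = 2`; either way there are `gcd(p, q - 1)` of them. Each
residue class meets `[1, n]` in `n / q ^ k + O(1)` points, so the sum is
`gcd(p, q - 1) ∑_k n / q ^ k + O(log n) = gcd(p, q - 1) n / (q - 1) + O(log n)`.
-/

open Finset Filter Topology

lemma Odd.card_filter_pow_eq_neg_one {R : Type*} [Ring R] [Fintype R] [DecidableEq R] {p : ℕ}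
    (hp : Odd p) : #{x : R | x ^ p = -1} = #{x : R | x ^ p = 1} := by
  refine card_nbij' Neg.neg Neg.neg ?_ ?_ (fun x _ => neg_neg x) (fun x _ => neg_neg x) <;>
    intro x hx <;> simp_all [hp.neg_pow]

lemma card_filter_pow_eq_one_eq_card_rootsOfUnity {M : Type*} [CommMonoid M] [Fintype M]
    [DecidableEq M] {p : ℕ} (hp : p ≠ 0) :
    #{x : M | x ^ p = 1} = Nat.card (rootsOfUnity p M) := by
  rw [← Fintype.card_subtype, ← Nat.card_eq_fintype_card]
  exact Nat.card_congr
    { toFun x := ⟨Units.ofPowEqOne x.1 p x.2 hp, by simp⟩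
      invFun ζ := ⟨ζ.1, (mem_rootsOfUnity' p ζ.1).1 ζ.2⟩
      left_inv x := rfl
      right_inv ζ := by ext; rfl }

lemma card_rootsOfUnity_eq_one_of_coprime {M : Type*} [CommMonoid M] [Finite Mˣ] {p : ℕ}
    (h : (Nat.card Mˣ).Coprime p) : Nat.card (rootsOfUnity p M) = 1 := by
  rw [Subgroup.card_eq_one, Subgroup.eq_bot_iff_forall]
  intro ζ hζ
  rw [← orderOf_eq_one_iff, ← Nat.dvd_one, ← h.gcd_eq_one]
  exact Nat.dvd_gcd (orderOf_dvd_natCard ζ) (orderOf_dvd_of_pow_eq_one hζ)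

lemma card_rootsOfUnity_of_isCyclic {M : Type*} [CommMonoid M] [Finite Mˣ] [IsCyclic Mˣ] (p : ℕ) :
    Nat.card (rootsOfUnity p M) = (Nat.card Mˣ).gcd p := by
  rw [rootsOfUnity_eq_ker, IsCyclic.card_powMonoidHom_ker]

lemma ZMod.card_rootsOfUnity_prime_pow {p q k : ℕ} (hq : q.Prime) (hpq : p.Coprime q)
    (hk : k ≠ 0) : Nat.card (rootsOfUnity p (ZMod (q ^ k))) = p.gcd (q - 1) := by
  have : NeZero (q ^ k) := ⟨pow_ne_zero k hq.ne_zero⟩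
  have hcard : Nat.card (ZMod (q ^ k))ˣ = q ^ (k - 1) * (q - 1) := by
    rw [Nat.card_eq_fintype_card, ZMod.card_units_eq_totient,
      Nat.totient_prime_pow hq (Nat.pos_of_ne_zero hk)]
  have hgcd : (Nat.card (ZMod (q ^ k))ˣ).gcd p = p.gcd (q - 1) := by
    rw [hcard, Nat.Coprime.gcd_mul_left_cancel _ (hpq.symm.pow_left _), Nat.gcd_comm]
  obtain rfl | hq2 := eq_or_ne q 2
  · have hcop : (Nat.card (ZMod (2 ^ k))ˣ).Coprime p := by
      rw [hcard]; simpa using hpq.symm.pow_left (k - 1)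
    rw [← hgcd, hcop.gcd_eq_one, card_rootsOfUnity_eq_one_of_coprime hcop]
  · have := ZMod.isCyclic_units_of_prime_pow q hq hq2 k
    rw [card_rootsOfUnity_of_isCyclic, hgcd]

lemma ZMod.card_filter_pow_eq_neg_one_prime_pow {p q k : ℕ} [Fact q.Prime] (hp : Odd p)
    (hpq : p.Coprime q) (hk : k ≠ 0) :
    #{x : ZMod (q ^ k) | x ^ p = -1} = p.gcd (q - 1) := by
  rw [hp.card_filter_pow_eq_neg_one, card_filter_pow_eq_one_eq_card_rootsOfUnity hp.pos.ne',
    ZMod.card_rootsOfUnity_prime_pow Fact.out hpq hk]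

lemma ZMod.natCast_pow_eq_neg_one_iff_dvd {m : ℕ} (i p : ℕ) :
    (i : ZMod m) ^ p = -1 ↔ m ∣ i ^ p + 1 := by
  rw [eq_neg_iff_add_eq_zero, ← ZMod.natCast_eq_zero_iff]
  push_cast
  rfl

lemma Nat.abs_card_filter_Icc_modEq_sub_le {m : ℕ} (hm : 0 < m) (n v : ℕ) :
    |(#{i ∈ Icc 1 n | i ≡ v [MOD m]} : ℝ) - n / m| ≤ 1 := by
  have hcard := Nat.Ioc_filter_modEq_card 0 n hm v
  rw [← zero_add 1, Icc_add_one_left_eq_Ioc]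
  set x : ℚ := (n - v) / m
  set y : ℚ := ((0 : ℕ) - v) / m
  have hxy : x - y = n / m := by simp only [x, y]; push_cast; ring
  have h₁ : (n / m : ℚ) - 1 < ⌊x⌋ - ⌊y⌋ := by linarith [Int.sub_one_lt_floor x, Int.floor_le y]
  have h₂ : (⌊x⌋ - ⌊y⌋ : ℚ) < n / m + 1 := by linarith [Int.floor_le x, Int.sub_one_lt_floor y]
  have hd : 0 ≤ ⌊x⌋ - ⌊y⌋ := by
    have : (-1 : ℚ) < ⌊x⌋ - ⌊y⌋ := by linarith [show (0 : ℚ) ≤ n / m by positivity]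
    exact_mod_cast this
  rw [max_eq_left hd] at hcard
  have : |(#{i ∈ Ioc 0 n | i ≡ v [MOD m]} : ℚ) - n / m| ≤ 1 := by
    rw [abs_le, show (#{i ∈ Ioc 0 n | i ≡ v [MOD m]} : ℚ) = ⌊x⌋ - ⌊y⌋ by exact_mod_cast hcard]
    constructor <;> linarith
  simpa using (Rat.cast_le (K := ℝ)).2 this

lemma ZMod.abs_card_filter_Icc_natCast_mem_sub_le {m : ℕ} [NeZero m] (S : Finset (ZMod m))
    (n : ℕ) : |(#{i ∈ Icc 1 n | ((i : ℕ) : ZMod m) ∈ S} : ℝ) - #S * n / m| ≤ #S := by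
  have hfiber : ∀ x ∈ S, {i ∈ {i ∈ Icc 1 n | ((i : ℕ) : ZMod m) ∈ S} | ((i : ℕ) : ZMod m) = x} =
      {i ∈ Icc 1 n | i ≡ x.val [MOD m]} := by
    intro x hx
    rw [filter_filter]
    refine filter_congr fun i _ => ?_
    rw [← ZMod.natCast_eq_natCast_iff, ZMod.natCast_zmod_val]
    exact ⟨And.right, fun h => ⟨h ▸ hx, h⟩⟩
  rw [card_eq_sum_card_fiberwise (f := fun i : ℕ => (i : ZMod m)) (t := S) (by simp [Set.MapsTo]),
    sum_congr rfl fun x hx => by rw [hfiber x hx]]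
  calc |(∑ x ∈ S, #{i ∈ Icc 1 n | i ≡ x.val [MOD m]} : ℕ) - #S * n / (m : ℝ)|
      = |∑ x ∈ S, ((#{i ∈ Icc 1 n | i ≡ x.val [MOD m]} : ℝ) - n / m)| := by
        rw [sum_sub_distrib, sum_const, nsmul_eq_mul, Nat.cast_sum, mul_div_assoc]
    _ ≤ ∑ x ∈ S, |(#{i ∈ Icc 1 n | i ≡ x.val [MOD m]} : ℝ) - n / m| := abs_sum_le_sum_abs _ _
    _ ≤ ∑ x ∈ S, 1 := sum_le_sum fun x _ =>
        Nat.abs_card_filter_Icc_modEq_sub_le (NeZero.pos m) n x.val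
    _ = #S := by simp

lemma padicValNat_eq_card_filter_Icc_pow_dvd {q m K : ℕ} (hq : q.Prime) (hm : m ≠ 0)
    (hK : m ≤ q ^ K) : padicValNat q m = #{k ∈ Icc 1 K | q ^ k ∣ m} := by
  rw [← Nat.factorization_def m hq, Nat.factorization_eq_card_pow_dvd m hq,
    Nat.Ico_filter_pow_dvd_eq hq hm hK]

lemma sum_padicValNat_eq_sum_card_filter_pow_dvd {ι : Type*} {s : Finset ι} {f : ι → ℕ}
    {q K : ℕ} (hq : q.Prime) (hf : ∀ i ∈ s, f i ≠ 0 ∧ f i ≤ q ^ K) :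
    ∑ i ∈ s, padicValNat q (f i) = ∑ k ∈ Icc 1 K, #{i ∈ s | q ^ k ∣ f i} := by
  rw [sum_congr rfl fun i hi => padicValNat_eq_card_filter_Icc_pow_dvd hq (hf i hi).1 (hf i hi).2]
  simp only [card_filter]
  exact sum_comm

lemma sum_Icc_div_pow {q : ℝ} (hq : 1 < q) (x : ℝ) (K : ℕ) :
    ∑ k ∈ Icc 1 K, x / q ^ k = x / (q - 1) - x / q ^ K / (q - 1) := by
  have : q - 1 ≠ 0 := sub_ne_zero.2 hq.ne'
  have : q ≠ 0 := by positivity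
  induction K with
  | zero => simp
  | succ K ih =>
    rw [sum_Icc_succ_top (by omega), ih]
    field_simp
    ring

lemma abs_sum_Icc_sub_div_sub_one_le {q c x : ℝ} (hq : 1 < q) (hc : 0 ≤ c) {K : ℕ}
    (hx₀ : 0 ≤ x) (hx : x ≤ q ^ K) {a : ℕ → ℝ} (ha : ∀ k ∈ Icc 1 K, |a k - c * x / q ^ k| ≤ c) :
    |∑ k ∈ Icc 1 K, a k - c * x / (q - 1)| ≤ c * K + c / (q - 1) := by
  have hq₁ : 0 < q - 1 := sub_pos.2 hq
  have htail : |c * x / q ^ K / (q - 1)| ≤ c / (q - 1) := by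
    rw [abs_of_nonneg (by positivity), mul_div_assoc]
    gcongr
    exact mul_le_of_le_one_right hc ((div_le_one (by positivity)).2 hx)
  calc |∑ k ∈ Icc 1 K, a k - c * x / (q - 1)|
      = |∑ k ∈ Icc 1 K, (a k - c * x / q ^ k) - c * x / q ^ K / (q - 1)| := by
        rw [sum_sub_distrib, sum_Icc_div_pow hq]; ring_nf
    _ ≤ ∑ k ∈ Icc 1 K, |a k - c * x / q ^ k| + |c * x / q ^ K / (q - 1)| :=
        (abs_sub _ _).trans (add_le_add_left (abs_sum_le_sum_abs _ _) _)
    _ ≤ ∑ k ∈ Icc 1 K, c + c / (q - 1) := add_le_add (sum_le_sum ha) htail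
    _ = c * K + c / (q - 1) := by simp [mul_comm]

lemma tendsto_natLog_div_atTop (b : ℕ) :
    Tendsto (fun n : ℕ => (Nat.log b n : ℝ) / n) atTop (𝓝 0) := by
  have hlog : Tendsto (fun n : ℕ => Real.log n / n) atTop (𝓝 0) :=
    Real.isLittleO_log_id_atTop.tendsto_div_nhds_zero.comp tendsto_natCast_atTop_atTop
  refine squeeze_zero (fun n => by positivity) (fun n => ?_)
    (by simpa using hlog.div_const (Real.log b))
  rw [div_right_comm, ← Real.logb]
  exact div_le_div_of_nonneg_right (Real.natLog_le_logb n b) n.cast_nonneg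

lemma tendsto_div_natCast_of_abs_sub_mul_le {a e : ℕ → ℝ} {L : ℝ}
    (h : ∀ n, |a n - n * L| ≤ e n) (he : Tendsto (fun n => e n / n) atTop (𝓝 0)) :
    Tendsto (fun n => a n / n) atTop (𝓝 L) := by
  refine tendsto_iff_norm_sub_tendsto_zero.2
    (squeeze_zero' (.of_forall fun n => norm_nonneg _) ?_ he)
  filter_upwards [eventually_gt_atTop 0] with n hn
  have hn : (0 : ℝ) < n := Nat.cast_pos.2 hn
  rw [Real.norm_eq_abs, ← mul_div_cancel_left₀ L hn.ne', ← sub_div, abs_div, abs_of_pos hn]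
  exact div_le_div_of_nonneg_right (h n) hn.le

lemma abs_sum_padicValNat_pow_add_one_sub_le {p q : ℕ} [hq : Fact q.Prime] (hp : Odd p)
    (hpq : p.Coprime q) (n : ℕ) :
    |∑ i ∈ Icc 1 n, (padicValNat q (i ^ p + 1) : ℝ) - n * (p.gcd (q - 1) / ((q : ℝ) - 1))| ≤
      p.gcd (q - 1) * (p * (Nat.log q n + 1)) + p.gcd (q - 1) / ((q : ℝ) - 1) := by
  set K := p * (Nat.log q n + 1)
  have hnK : n ^ p < q ^ K := by
    rw [show K = (Nat.log q n + 1) * p from mul_comm _ _, pow_mul]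
    exact Nat.pow_lt_pow_left (Nat.lt_pow_succ_log_self hq.out.one_lt n) hp.pos.ne'
  have hbound : ∀ i ∈ Icc 1 n, i ^ p + 1 ≠ 0 ∧ i ^ p + 1 ≤ q ^ K := fun i hi =>
    ⟨by positivity, by grind [Nat.pow_le_pow_left (mem_Icc.1 hi).2 p]⟩
  have hK : (n : ℝ) ≤ (q : ℝ) ^ K := by
    exact_mod_cast (Nat.le_self_pow hp.pos.ne' n).trans hnK.le
  rw [← Nat.cast_sum, sum_padicValNat_eq_sum_card_filter_pow_dvd hq.out hbound, Nat.cast_sum,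
    mul_div_left_comm, ← mul_div_assoc]
  refine (abs_sum_Icc_sub_div_sub_one_le (Nat.one_lt_cast.2 hq.out.one_lt) (Nat.cast_nonneg _)
    n.cast_nonneg hK fun k hk => ?_).trans_eq (by push_cast [K]; rfl)
  simpa only [ZMod.card_filter_pow_eq_neg_one_prime_pow hp hpq (by grind : k ≠ 0),
    mem_filter_univ, ZMod.natCast_pow_eq_neg_one_iff_dvd, Nat.cast_pow] using
    ZMod.abs_card_filter_Icc_natCast_mem_sub_le {x : ZMod (q ^ k) | x ^ p = -1} n

theorem valq_pow_p_add_one_asymptotic (p q : ℕ) (hp : p.Prime) (hq : q.Prime)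
    (hpq : p ≠ q) (hodd : Odd p) :
    Tendsto (fun n : ℕ =>
        (∑ i ∈ Finset.Icc 1 n, (padicValInt q ((i : ℤ) ^ p + 1) : ℝ)) / n)
      atTop (nhds ((Nat.gcd p (q - 1) : ℝ) / ((q : ℝ) - 1))) := by
  have : Fact q.Prime := ⟨hq⟩
  set g : ℝ := ((p.gcd (q - 1) : ℕ) : ℝ)
  have hval (i : ℕ) : padicValInt q ((i : ℤ) ^ p + 1) = padicValNat q (i ^ p + 1) := by
    exact_mod_cast padicValInt.of_nat
  simp_rw [hval]
  refine tendsto_div_natCast_of_abs_sub_mul_le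
    (abs_sum_padicValNat_pow_add_one_sub_le hodd ((Nat.coprime_primes hp hq).2 hpq)) ?_
  have hlog := ((tendsto_natLog_div_atTop q).const_mul (g * p)).add
    (tendsto_one_div_atTop_nhds_zero_nat.const_mul (g * p + g / (q - 1)))
  rw [mul_zero, mul_zero, add_zero] at hlog
  refine hlog.congr fun n => ?_
  ring
end
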